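/- Let E: ℍ → V_n ⊗ ℂ be real analytic, where V_n = ⊕_{i+j=n} ℂX^iY^j, invariant under the translation T: z ↦ z+1 acting on V_n by (X,Y) ↦ (X+Y, Y), and satisfying ∂E/∂z = 0 and ∂E/∂z̄ = c·(X - z̄Y)^n for some c ∈ ℂ. Then c = 0 and E = (α/(πi)^n)·Y^n for some constant α ∈ ℂ. -/

import Mathlib

/-!
The Wirtinger equations say that the real derivative of each coefficient `e_d` of `E` is
`(c * p_d(z)) • conj`, where `p_d(z)` is the matching coefficient of `(X - z̄Y)^n`. For the
monomial `X^n` we have `p_d = 1`, so `e_d(z) = c z̄ + b` on `ℍ`; since `T` fixes the `X^n`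
coefficient, `e_d` is `1`-periodic, which forces `c = 0`. Then all coefficients have zero
derivative and `E` is constant on the connected set `ℍ`. Finally, a `T`-invariant homogeneous
polynomial `P` of degree `n` has a periodic dehomogenization `t ↦ P(t, 1)`, which is therefore
constant, and homogeneity turns this into `P = a Y^n`.
-/

open MvPolynomial

theorem Polynomial.eq_C_eval_zero_of_eval_add_one {R : Type*} [CommRing R] [IsDomain R]
    [CharZero R] {q : Polynomial R} (h : ∀ t, q.eval (t + 1) = q.eval t) :
    q = Polynomial.C (q.eval 0) := by
  have hnat : ∀ k : ℕ, q.eval (k : R) = q.eval 0 := by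
    intro k
    induction k with
    | zero => simp
    | succ k ih => rw [Nat.cast_succ, h, ih]
  refine Polynomial.eq_of_infinite_eval_eq _ _
    ((Set.infinite_range_of_injective Nat.cast_injective).mono ?_)
  rintro _ ⟨k, rfl⟩
  simp [hnat k]

theorem Finsupp.ext_fin_two_iff {d e : Fin 2 →₀ ℕ} : d = e ↔ d 0 = e 0 ∧ d 1 = e 1 := by
  rw [Finsupp.ext_iff, Fin.forall_fin_two]

theorem Finsupp.degree_fin_two (d : Fin 2 →₀ ℕ) : d.degree = d 0 + d 1 := by
  rw [Finsupp.degree_eq_sum, Fin.sum_univ_two]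

namespace MvPolynomial

section CommRing

variable {R : Type*} [CommRing R]

noncomputable def dehomogenize (P : MvPolynomial (Fin 2) R) : Polynomial R :=
  aeval (![Polynomial.X, 1] : Fin 2 → Polynomial R) P

theorem IsHomogeneous.apply_zero_add_apply_one {n : ℕ} {P : MvPolynomial (Fin 2) R}
    (hP : P.IsHomogeneous n) {d : Fin 2 →₀ ℕ} (hd : d ∈ P.support) : d 0 + d 1 = n := by
  rw [← Finsupp.degree_fin_two, Finsupp.degree_eq_weight_one]
  exact hP (mem_support_iff.mp hd)

theorem aeval_X_C_monomial (r : R) (m : Fin 2 →₀ ℕ) (a : R) :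
    aeval (![Polynomial.X, Polynomial.C r] : Fin 2 → Polynomial R) (monomial m a)
      = Polynomial.C (a * r ^ m 1) * Polynomial.X ^ m 0 := by
  rw [aeval_monomial, Finsupp.prod_fintype _ _ (fun _ => pow_zero _), Fin.prod_univ_two]
  simp only [Matrix.cons_val_zero, Matrix.cons_val_one, Polynomial.algebraMap_eq, map_mul,
    map_pow]
  ring

theorem coeff_aeval_X_C (r : R) (Q : MvPolynomial (Fin 2) R) (k : ℕ) :
    (aeval (![Polynomial.X, Polynomial.C r] : Fin 2 → Polynomial R) Q).coeff k
      = ∑ d ∈ Q.support, if d 0 = k then coeff d Q * r ^ d 1 else 0 := by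
  conv_lhs => rw [Q.as_sum]
  simp only [map_sum, Polynomial.finsetSum_coeff, aeval_X_C_monomial, Polynomial.coeff_C_mul,
    Polynomial.coeff_X_pow, mul_ite, mul_one, mul_zero, eq_comm]

theorem coeff_aeval_X_zero (Q : MvPolynomial (Fin 2) R) (k : ℕ) :
    (aeval (![Polynomial.X, 0] : Fin 2 → Polynomial R) Q).coeff k
      = coeff (Finsupp.single 0 k) Q := by
  rw [← Polynomial.C_0, coeff_aeval_X_C, Finset.sum_eq_single (Finsupp.single 0 k)]
  · simp
  · intro d _ hd
    rw [Ne, Finsupp.ext_fin_two_iff, Finsupp.single_eq_same] at hd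
    split_ifs with h0
    · rw [zero_pow (fun h1 => hd ⟨h0, by simp [h1]⟩), mul_zero]
    · rfl
  · intro h
    simp [notMem_support_iff.mp h]

theorem IsHomogeneous.coeff_eq_coeff_dehomogenize {n : ℕ} {P : MvPolynomial (Fin 2) R}
    (hP : P.IsHomogeneous n) {d : Fin 2 →₀ ℕ} (hd : d 0 + d 1 = n) :
    coeff d P = P.dehomogenize.coeff (d 0) := by
  rw [dehomogenize, ← Polynomial.C_1, coeff_aeval_X_C, Finset.sum_eq_single d]
  · simp
  · intro e he hed
    have := hP.apply_zero_add_apply_one he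
    rw [Ne, Finsupp.ext_fin_two_iff] at hed
    rw [if_neg (by omega)]
  · intro h
    simp [notMem_support_iff.mp h]

theorem IsHomogeneous.eq_C_mul_X_one_pow {n : ℕ} {P : MvPolynomial (Fin 2) R}
    (hP : P.IsHomogeneous n) {a : R} (ha : P.dehomogenize = Polynomial.C a) :
    P = C a * X 1 ^ n := by
  ext d
  rw [coeff_C_mul, coeff_X_pow]
  by_cases hd : d 0 + d 1 = n
  · have hsingle : Finsupp.single 1 n = d ↔ d 0 = 0 := by
      rw [Finsupp.ext_fin_two_iff, Finsupp.single_eq_same, Finsupp.single_eq_of_ne zero_ne_one]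
      omega
    rw [hP.coeff_eq_coeff_dehomogenize hd, ha, Polynomial.coeff_C]
    simp only [hsingle]
    split_ifs <;> simp
  · have hsingle : Finsupp.single 1 n ≠ d := by
      rw [Ne, Finsupp.ext_fin_two_iff, Finsupp.single_eq_same,
        Finsupp.single_eq_of_ne zero_ne_one]
      omega
    rw [hP.coeff_eq_zero (by rwa [Finsupp.degree_fin_two]), if_neg hsingle, mul_zero]

theorem eval_dehomogenize (P : MvPolynomial (Fin 2) R) (t : R) :
    P.dehomogenize.eval t = aeval ![t, 1] P := by
  rw [dehomogenize, ← Polynomial.coe_aeval_eq_eval, ← AlgHom.comp_apply, comp_aeval]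
  congr
  funext i
  fin_cases i <;> simp

theorem coeff_single_zero_bind₁_translate (Q : MvPolynomial (Fin 2) R) (k : ℕ) :
    coeff (Finsupp.single 0 k) (bind₁ ![(X 0 : MvPolynomial (Fin 2) R) + X 1, X 1] Q)
      = coeff (Finsupp.single 0 k) Q := by
  rw [← coeff_aeval_X_zero, ← coeff_aeval_X_zero, aeval_bind₁]
  congr
  funext i
  fin_cases i <;> simp

theorem coeff_single_zero_X_sub_C_mul_pow (w : R) (n : ℕ) :
    coeff (Finsupp.single 0 n) ((X 0 - C w * X 1 : MvPolynomial (Fin 2) R) ^ n) = 1 := by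
  rw [← coeff_aeval_X_zero]
  simp

end CommRing

theorem IsHomogeneous.exists_eq_C_mul_X_one_pow_of_bind₁_translate_eq_self {R : Type*}
    [CommRing R] [IsDomain R] [CharZero R] {n : ℕ} {P : MvPolynomial (Fin 2) R}
    (hP : P.IsHomogeneous n) (hT : bind₁ ![(X 0 : MvPolynomial (Fin 2) R) + X 1, X 1] P = P) :
    ∃ a, P = C a * X 1 ^ n := by
  have hperiodic : ∀ t, P.dehomogenize.eval (t + 1) = P.dehomogenize.eval t := by
    intro t
    rw [eval_dehomogenize, eval_dehomogenize]
    conv_rhs => rw [← hT, aeval_bind₁]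
    congr
    funext i
    fin_cases i <;> simp
  exact ⟨_, hP.eq_C_mul_X_one_pow (Polynomial.eq_C_eval_zero_of_eval_add_one hperiodic)⟩

end MvPolynomial

namespace Complex

theorem continuousLinearMap_ext {F : Type*} [NormedAddCommGroup F] [NormedSpace ℝ F]
    {L M : ℂ →L[ℝ] F} (h1 : L 1 = M 1) (hI : L I = M I) : L = M :=
  ContinuousLinearMap.coe_injective <| basisOneI.ext fun i => by fin_cases i <;> simp [h1, hI]

theorem eq_smul_conj_of_wirtinger {L : ℂ →L[ℝ] ℂ} {a : ℂ}
    (hdz : (1 / 2 : ℂ) * (L 1 - I * L I) = 0) (hdzbar : (1 / 2 : ℂ) * (L 1 + I * L I) = a) :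
    L = a • conjCLE.toContinuousLinearMap := by
  have h1 : L 1 = a := by linear_combination hdz + hdzbar
  have hI : L I = a * -I := by linear_combination (-I) * (hdzbar - hdz) + L I * I_sq
  exact continuousLinearMap_ext (by simp [h1]) (by simp [hI])

theorem exists_eq_mul_conj_add_of_fderiv_eq {f : ℂ → ℂ} {a : ℂ}
    (hf : ∀ z, 0 < z.im → DifferentiableAt ℝ f z)
    (hf' : ∀ z, 0 < z.im → fderiv ℝ f z = a • conjCLE.toContinuousLinearMap) :
    ∃ b, ∀ z, 0 < z.im → f z = a * starRingEnd ℂ z + b := by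
  set g : ℂ →L[ℝ] ℂ := a • conjCLE.toContinuousLinearMap
  obtain ⟨b, hb⟩ := (isOpen_lt continuous_const continuous_im).exists_eq_add_of_fderiv_eq
    (convex_halfSpace_im_gt 0).isPreconnected (fun z hz => (hf z hz).differentiableWithinAt)
    g.differentiable.differentiableOn (fun z hz => by rw [hf' z hz, g.fderiv])
  exact ⟨b, fun z hz => by simpa [g] using hb hz⟩

end Complex

/-- Let E : ℍ → V_n ⊗ ℂ be real analytic (V_n = homogeneous polynomials of degree n in X, Y,
realized as homogeneous MvPolynomials in variables X 0, X 1), invariant under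
T : z ↦ z + 1 acting on V_n by (X,Y) ↦ (X+Y,Y), and satisfying ∂E/∂z = 0 and
∂E/∂z̄ = c·(X - z̄Y)^n coefficientwise (Wirtinger derivatives ∂/∂z = ½(∂_x - i∂_y),
∂/∂z̄ = ½(∂_x + i∂_y)).  Then c = 0 and E = (α/(πi)^n)·Y^n for some α ∈ ℂ. -/
theorem stmt13 (n : ℕ) (E : ℂ → MvPolynomial (Fin 2) ℂ) (c : ℂ)
    (hhom : ∀ z : ℂ, 0 < z.im → (E z).IsHomogeneous n)
    (hanal : ∀ d : Fin 2 →₀ ℕ, ∀ z : ℂ, 0 < z.im →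
      AnalyticAt ℝ (fun w => MvPolynomial.coeff d (E w)) z)
    (hT : ∀ z : ℂ, 0 < z.im →
      MvPolynomial.bind₁ ![(X 0 : MvPolynomial (Fin 2) ℂ) + X 1, X 1] (E (z + 1)) = E z)
    (hdz : ∀ d : Fin 2 →₀ ℕ, ∀ z : ℂ, 0 < z.im →
      (1 / 2 : ℂ) * (fderiv ℝ (fun w => MvPolynomial.coeff d (E w)) z 1
          - Complex.I * fderiv ℝ (fun w => MvPolynomial.coeff d (E w)) z Complex.I) = 0)
    (hdzbar : ∀ d : Fin 2 →₀ ℕ, ∀ z : ℂ, 0 < z.im →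
      (1 / 2 : ℂ) * (fderiv ℝ (fun w => MvPolynomial.coeff d (E w)) z 1
          + Complex.I * fderiv ℝ (fun w => MvPolynomial.coeff d (E w)) z Complex.I)
        = c * MvPolynomial.coeff d ((X 0 - C (starRingEnd ℂ z) * X 1) ^ n)) :
    c = 0 ∧ ∃ α : ℂ, ∀ z : ℂ, 0 < z.im →
      E z = C (α / (Real.pi * Complex.I) ^ n) * (X 1) ^ n := by
  have hI : 0 < Complex.I.im := by simp
  have hI1 : 0 < (Complex.I + 1).im := by simp
  have hderiv : ∀ d z, 0 < z.im → fderiv ℝ (fun w => coeff d (E w)) z =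
      (c * coeff d ((X 0 - C (starRingEnd ℂ z) * X 1) ^ n)) •
        Complex.conjCLE.toContinuousLinearMap :=
    fun d z hz => Complex.eq_smul_conj_of_wirtinger (hdz d z hz) (hdzbar d z hz)
  have hc : c = 0 := by
    obtain ⟨b, hb⟩ := Complex.exists_eq_mul_conj_add_of_fderiv_eq
      (fun z hz => (hanal (Finsupp.single 0 n) z hz).differentiableAt)
      (fun z hz => by rw [hderiv _ z hz, coeff_single_zero_X_sub_C_mul_pow, mul_one])
    have hper := congrArg (coeff (Finsupp.single 0 n)) (hT Complex.I hI)
    rw [coeff_single_zero_bind₁_translate, hb _ hI1, hb _ hI, map_add, map_one] at hper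
    linear_combination hper
  subst hc
  have hconst : ∀ z, 0 < z.im → E z = E Complex.I := by
    intro z hz
    ext d
    obtain ⟨b, hb⟩ := Complex.exists_eq_mul_conj_add_of_fderiv_eq (a := 0)
      (fun z hz => (hanal d z hz).differentiableAt)
      (fun z hz => by rw [hderiv d z hz, zero_mul])
    rw [hb z hz, hb _ hI, zero_mul, zero_mul]
  obtain ⟨a, ha⟩ := (hhom _ hI).exists_eq_C_mul_X_one_pow_of_bind₁_translate_eq_self
    (by simpa only [hconst _ hI1] using hT _ hI)
  have hπI : ((Real.pi : ℂ) * Complex.I) ^ n ≠ 0 :=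
    pow_ne_zero _ (mul_ne_zero (Complex.ofReal_ne_zero.mpr Real.pi_ne_zero) Complex.I_ne_zero)
  exact ⟨rfl, a * (Real.pi * Complex.I) ^ n, fun z hz => by
    rw [hconst z hz, ha, mul_div_cancel_right₀ _ hπI]⟩
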